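/- Let b be a prime, let m ≥ 1, s ≥ 1 and t be integers with 0 ≤ t ≤ m, and let C_1, …, C_s be infinite matrices over 𝔽_b generating a digital (t,s)-sequence, in the sense that for every integer m' with max(t,1) ≤ m' ≤ m, the upper-left m'×m' submatrices C_1^{(m')}, …, C_s^{(m')} satisfy ρ_{m'}(C_1^{(m')},…,C_s^{(m')}) ≥ m' − t. Let 0 = w_1 ≤ w_2 ≤ ⋯ ≤ w_s be nonnegative integers and let C̃_1, …, C̃_s be the column-row reduced m×m matrices obtained from C_1^{(m)},…,C_s^{(m)}. Then ρ_m(C̃_1,…,C̃_s) ≥ max{0, m − w_s − t}. -/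

import Mathlib

open scoped BigOperators

/-- Linear independence of the system consisting of the first `d j` rows of each matrix `C j`. -/
def rowsLinIndep (b m : ℕ) {ι : Type*} (C : ι → Matrix (Fin m) (Fin m) (ZMod b))
    (d : ι → ℕ) : Prop :=
  LinearIndependent (ZMod b)
    (fun p : {p : ι × Fin m // (p.2 : ℕ) < d p.1} => C p.1.1 p.1.2)

/-- The linear independence parameter `ρ_m(C_1,…,C_s)`: the largest `d ∈ {0,…,m}` such that
for every choice of nonnegative integers `d_j` summing to `d`, the collection of the first `d_j`
rows of the matrices is linearly independent. -/
noncomputable def rho (b m : ℕ) {ι : Type*} [Fintype ι]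
    (C : ι → Matrix (Fin m) (Fin m) (ZMod b)) : ℕ :=
  sSup {d | d ≤ m ∧ ∀ dv : ι → ℕ, (∑ j, dv j) = d → rowsLinIndep b m C dv}

/-- Row reduced matrix: the last `min m w` rows are set to zero. -/
def rowReduced {b m : ℕ} (C : Matrix (Fin m) (Fin m) (ZMod b)) (w : ℕ) :
    Matrix (Fin m) (Fin m) (ZMod b) :=
  Matrix.of fun i r => if (i : ℕ) < m - min m w then C i r else 0

/-- Column-row reduced matrix: the last `min m w` rows and columns are set to zero. -/
def colRowReduced {b m : ℕ} (C : Matrix (Fin m) (Fin m) (ZMod b)) (w : ℕ) :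
    Matrix (Fin m) (Fin m) (ZMod b) :=
  Matrix.of fun i r => if (i : ℕ) < m - min m w ∧ (r : ℕ) < m - min m w then C i r else 0

/-- Reduced matrix with possibly different row/column reduction indices. -/
def colRowReduced' {b m : ℕ} (C : Matrix (Fin m) (Fin m) (ZMod b)) (wr wc : ℕ) :
    Matrix (Fin m) (Fin m) (ZMod b) :=
  Matrix.of fun i r => if (i : ℕ) < m - min m wr ∧ (r : ℕ) < m - min m wc then C i r else 0

/-- Upper-left `m × m` submatrix of an infinite matrix. -/
def upperLeft {b : ℕ} (C : Matrix ℕ ℕ (ZMod b)) (m : ℕ) : Matrix (Fin m) (Fin m) (ZMod b) :=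
  Matrix.of fun i r => C (i : ℕ) (r : ℕ)

/-- The `k`-th coordinate value produced by the digital method with generating matrix `C`. -/
noncomputable def digitalPoint (b m : ℕ) (C : Matrix (Fin m) (Fin m) (ZMod b)) (k : ℕ) : ℝ :=
  ∑ i : Fin m,
    ((C.mulVec fun r : Fin m => ((k / b ^ (r : ℕ)) % b : ZMod b)) i).val
      / (b : ℝ) ^ ((i : ℕ) + 1)

open Classical in
/-- The `b^m` points `P 0, …, P (b^m - 1)` form a `(t,m,|ι|)`-net in base `b` (counted with
multiplicity): every elementary interval of volume `b^(t-m)` contains exactly `b^t` points. -/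
def isNet (b m t : ℕ) {ι : Type*} [Fintype ι] (P : ℕ → ι → ℝ) : Prop :=
  ∀ d a : ι → ℕ, (∀ j, a j < b ^ d j) → (∑ j, d j) = m - t →
    ((Finset.range (b ^ m)).filter fun k =>
        ∀ j, (a j : ℝ) / (b : ℝ) ^ d j ≤ P k j ∧ P k j < ((a j : ℝ) + 1) / (b : ℝ) ^ d j).card
      = b ^ t

/-!
Put `n = m - w_s`. As `w_j ≤ w_s`, the upper-left `n × n` block of each `C̃_j` is `C_j^{(n)}`.
A selection of `n - t` leading rows of the `C̃_j` lies within the first `n` rows, and truncating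
these rows to their first `n` coordinates gives leading rows of the `C_j^{(n)}`, which are
independent since `ρ_n(C_1^{(n)},…,C_s^{(n)}) ≥ n - t`; rows with independent truncations are
independent.
-/

theorem rowsLinIndep.mono {b m : ℕ} {ι : Type*} {C : ι → Matrix (Fin m) (Fin m) (ZMod b)}
    {dv dv' : ι → ℕ} (h : ∀ j, dv' j ≤ dv j) (H : rowsLinIndep b m C dv) :
    rowsLinIndep b m C dv' :=
  H.comp (fun p : {p : ι × Fin m // (p.2 : ℕ) < dv' p.1} =>
      (⟨p.1, p.2.trans_le (h p.1.1)⟩ : {p : ι × Fin m // (p.2 : ℕ) < dv p.1}))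
    fun _ _ hpq => Subtype.ext (Subtype.mk.inj hpq)

theorem rowsLinIndep_of_sum_le_rho {b m : ℕ} {ι : Type*} [Fintype ι]
    {C : ι → Matrix (Fin m) (Fin m) (ZMod b)} {dv : ι → ℕ} (hdv : ∑ j, dv j ≤ rho b m C) :
    rowsLinIndep b m C dv := by
  rcases isEmpty_or_nonempty ι with hι | hι
  · exact linearIndependent_empty_type
  obtain ⟨j₀⟩ := hι
  have hzero : 0 ∈ {d | d ≤ m ∧ ∀ dv : ι → ℕ, (∑ j, dv j) = d → rowsLinIndep b m C dv} := by
    refine ⟨Nat.zero_le m, fun dv hdv => ?_⟩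
    have : IsEmpty {p : ι × Fin m // (p.2 : ℕ) < dv p.1} :=
      ⟨fun p => (p.2.trans_le (Finset.sum_eq_zero_iff.mp hdv p.1.1 (Finset.mem_univ _)).le).not_ge
        (Nat.zero_le _)⟩
    exact linearIndependent_empty_type
  obtain ⟨-, hrho⟩ := Nat.sSup_mem ⟨0, hzero⟩ ⟨m, fun _ hd => hd.1⟩
  -- pad `dv` at one index so that the row counts add up to exactly `rho b m C`
  classical
  let dv' : ι → ℕ := dv + Pi.single j₀ (rho b m C - ∑ j, dv j)
  have hsum : ∑ j, dv' j = rho b m C := by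
    simp only [dv', Pi.add_apply, Finset.sum_add_distrib, Finset.sum_pi_single',
      Finset.mem_univ, if_true]
    omega
  exact rowsLinIndep.mono (fun j => le_self_add) (hrho dv' hsum)

theorem le_rho {b m : ℕ} {ι : Type*} [Fintype ι] {C : ι → Matrix (Fin m) (Fin m) (ZMod b)}
    {d : ℕ} (hdm : d ≤ m) (h : ∀ dv : ι → ℕ, ∑ j, dv j = d → rowsLinIndep b m C dv) :
    d ≤ rho b m C :=
  le_csSup ⟨m, fun _ hd => hd.1⟩ ⟨hdm, h⟩

theorem rowsLinIndep.of_submatrix_castLE {b m n : ℕ} {ι : Type*}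
    {C : ι → Matrix (Fin m) (Fin m) (ZMod b)} {dv : ι → ℕ} (hnm : n ≤ m) (hdv : ∀ j, dv j ≤ n)
    (h : rowsLinIndep b n (fun j => (C j).submatrix (Fin.castLE hnm) (Fin.castLE hnm)) dv) :
    rowsLinIndep b m C dv := by
  let restrict : (Fin m → ZMod b) →ₗ[ZMod b] (Fin n → ZMod b) :=
    LinearMap.funLeft (ZMod b) (ZMod b) (Fin.castLE hnm)
  let shrink (p : {p : ι × Fin m // (p.2 : ℕ) < dv p.1}) : {p : ι × Fin n // (p.2 : ℕ) < dv p.1} :=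
    ⟨(p.1.1, ⟨p.1.2, p.2.trans_le (hdv p.1.1)⟩), p.2⟩
  have hshrink : Function.Injective shrink := by
    rintro ⟨⟨j, i⟩, hp⟩ ⟨⟨j', i'⟩, hp'⟩ h
    simp only [shrink, Subtype.mk.injEq, Prod.mk.injEq, Fin.mk.injEq] at h
    exact Subtype.ext (Prod.ext h.1 (Fin.ext h.2))
  exact LinearIndependent.of_comp restrict (h.comp shrink hshrink)

theorem upperLeft_submatrix_castLE {b m n : ℕ} (C : Matrix ℕ ℕ (ZMod b)) (hnm : n ≤ m) :
    (upperLeft C m).submatrix (Fin.castLE hnm) (Fin.castLE hnm) = upperLeft C n :=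
  rfl

theorem colRowReduced_submatrix_castLE {b m n : ℕ} (M : Matrix (Fin m) (Fin m) (ZMod b))
    {w : ℕ} (hnm : n ≤ m) (hnw : n + w ≤ m) :
    (colRowReduced M w).submatrix (Fin.castLE hnm) (Fin.castLE hnm) =
      M.submatrix (Fin.castLE hnm) (Fin.castLE hnm) := by
  ext i r
  have hi := i.isLt
  have hr := r.isLt
  simp only [Matrix.submatrix_apply, colRowReduced, Matrix.of_apply, Fin.val_castLE]
  rw [if_pos (by omega)]

/-- lower bound for column-row reduced matrices derived from a digital
`(t,s)`-sequence: `ρ_m(C̃_1,…,C̃_s) ≥ max{0, m − w_s − t}`. -/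
theorem rho_colRowReduced_ge (b m s t : ℕ) (hs : 1 ≤ s) (C : Fin s → Matrix ℕ ℕ (ZMod b))
    (hseq : ∀ m', max t 1 ≤ m' → m' ≤ m →
      m' - t ≤ rho b m' (fun j => upperLeft (C j) m'))
    (w : Fin s → ℕ) (hwmono : Monotone w) :
    max 0 (m - w ⟨s - 1, by omega⟩ - t) ≤
      rho b m (fun j => colRowReduced (upperLeft (C j) m) (w j)) := by
  set ws := w ⟨s - 1, by omega⟩
  rw [Nat.zero_max]
  rcases Nat.eq_zero_or_pos (m - ws - t) with hd | hd
  · exact hd ▸ Nat.zero_le _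
  have hw_le : ∀ j, w j ≤ ws := fun j => hwmono (Fin.le_def.mpr (Nat.le_sub_one_of_lt j.isLt))
  have hrho := hseq (m - ws) (by omega) (Nat.sub_le m ws)
  refine le_rho (by omega) fun dv hdv => ?_
  have hdv_le : ∀ j, dv j ≤ m - ws := fun j =>
    (hdv ▸ Finset.single_le_sum (fun _ _ => Nat.zero_le _) (Finset.mem_univ j)).trans
      (Nat.sub_le _ t)
  refine rowsLinIndep.of_submatrix_castLE (Nat.sub_le m ws) hdv_le ?_
  have hsub : (fun j => (colRowReduced (upperLeft (C j) m) (w j)).submatrix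
      (Fin.castLE (Nat.sub_le m ws)) (Fin.castLE (Nat.sub_le m ws))) =
      fun j => upperLeft (C j) (m - ws) := by
    funext j
    rw [colRowReduced_submatrix_castLE _ _ (by have := hw_le j; omega), upperLeft_submatrix_castLE]
  rw [hsub]
  exact rowsLinIndep_of_sum_le_rho (hdv ▸ hrho)
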